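/- arXiv:2011.08504 — 4 statements merged into one kernel-verified Lean document; each statement's English description precedes it below -/
import Mathlib

section
/- Let g : [a,b] × ℝ → ℝ be continuous, of linear growth (|g(t,y)| ≤ K(1+|y|)), and monotone decreasing in y (i.e. (y₁−y₂)(g(t,y₁)−g(t,y₂)) ≤ 0). Then the initial value problem z'(t)=g(t,z(t)), z(a)=η has a unique C¹ solution on [a,b]. -/
/-!
Truncate `g` outside `[a, b] × [-M, M]`, where `M` is the Grönwall bound that linear growth
imposes on every solution: the truncated field is bounded, uniformly continuous and still
decreasing in `y`. Averaging it in `y` over `[y, y + ε]` makes it Lipschitz, so Picard–Lindelöf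
gives solutions `Zₙ` of the averaged problems. Since the field is decreasing,
`d/dt (Zₘ - Zₙ)² = 2 (Zₘ - Zₙ) (Z'ₘ - Z'ₙ)` is bounded by a multiple of the averaging
errors, so the `Zₙ` are uniformly Cauchy; their limit satisfies the integral equation of the
truncated problem, and by the Grönwall bound it never leaves the region where the truncation
is inactive. The same estimate with no error gives uniqueness.
-/

open Set Filter Topology Function MeasureTheory
open scoped NNReal

theorem antitone_iff_forall_mul_sub_nonpos {f : ℝ → ℝ} :
    Antitone f ↔ ∀ x y, (x - y) * (f x - f y) ≤ 0 := by
  refine ⟨fun hf x y => ?_, fun hf x y hxy => ?_⟩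
  · rcases le_total x y with h | h
    · exact mul_nonpos_of_nonpos_of_nonneg (sub_nonpos.2 h) (sub_nonneg.2 (hf h))
    · exact mul_nonpos_of_nonneg_of_nonpos (sub_nonneg.2 h) (sub_nonpos.2 (hf h))
  · rcases hxy.eq_or_lt with rfl | hlt
    · exact le_rfl
    · have := hf x y
      nlinarith

theorem mul_sub_le_of_antitone {f : ℝ → ℝ} (hf : Antitone f) {x y p q δ R : ℝ}
    (hp : |p - f x| ≤ δ) (hq : |q - f y| ≤ δ) (hxy : |x - y| ≤ R) :
    (x - y) * (p - q) ≤ 2 * R * δ := by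
  have hmono := antitone_iff_forall_mul_sub_nonpos.1 hf x y
  have herr : (x - y) * ((p - f x) - (q - f y)) ≤ R * (δ + δ) :=
    calc (x - y) * ((p - f x) - (q - f y))
        ≤ |x - y| * |(p - f x) - (q - f y)| := by rw [← abs_mul]; exact le_abs_self _
      _ ≤ R * (δ + δ) := by
        gcongr
        · exact (abs_nonneg _).trans hxy
        · exact (abs_sub _ _).trans (add_le_add hp hq)
  linarith

section Dissipative

variable {E : Type*} [NormedAddCommGroup E] [InnerProductSpace ℝ E] {a b c : ℝ}

theorem sq_norm_sub_le_of_inner_sub_deriv_le {u v u' v' : ℝ → E}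
    (hu : ∀ t ∈ Icc a b, HasDerivWithinAt u (u' t) (Icc a b) t)
    (hv : ∀ t ∈ Icc a b, HasDerivWithinAt v (v' t) (Icc a b) t) (ha : u a = v a)
    (hc : ∀ t ∈ Ico a b, inner ℝ (u t - v t) (u' t - v' t) ≤ c) :
    ∀ t ∈ Icc a b, ‖u t - v t‖ ^ 2 ≤ 2 * c * (t - a) := by
  have hw : ∀ t ∈ Icc a b, HasDerivWithinAt (fun s => ‖u s - v s‖ ^ 2)
      (2 * inner ℝ (u t - v t) (u' t - v' t)) (Icc a b) t :=
    fun t ht => ((hu t ht).sub (hv t ht)).norm_sq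
  refine image_le_of_deriv_right_le_deriv_boundary (fun t ht => (hw t ht).continuousWithinAt)
    (fun t ht => (hw t (Ico_subset_Icc_self ht)).mono_of_mem_nhdsWithin
      (Icc_mem_nhdsGE_of_mem ht)) (by simp [ha]) (by fun_prop)
    (fun t _ => ((hasDerivAt_id t).sub_const a).const_mul (2 * c) |>.hasDerivWithinAt)
    (fun t ht => by linarith [hc t ht])

theorem eqOn_of_hasDerivWithinAt_of_inner_sub_nonpos {f : ℝ → E → E}
    (hf : ∀ t ∈ Ico a b, ∀ x y, inner ℝ (x - y) (f t x - f t y) ≤ 0) {u v : ℝ → E}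
    (hu : ∀ t ∈ Icc a b, HasDerivWithinAt u (f t (u t)) (Icc a b) t)
    (hv : ∀ t ∈ Icc a b, HasDerivWithinAt v (f t (v t)) (Icc a b) t) (ha : u a = v a) :
    EqOn u v (Icc a b) := fun t ht => by
  have := sq_norm_sub_le_of_inner_sub_deriv_le hu hv ha (fun s hs => hf s hs _ _) t ht
  rw [mul_zero, zero_mul, sq_nonpos_iff, norm_eq_zero, sub_eq_zero] at this
  exact this

end Dissipative

section Existence

variable {E : Type*} [NormedAddCommGroup E] [NormedSpace ℝ E] {a b : ℝ}

theorem norm_le_gronwallBound_of_norm_le_mul_one_add {f : ℝ → E → E} {K : ℝ}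
    (hf : ∀ t ∈ Icc a b, ∀ x, ‖f t x‖ ≤ K * (1 + ‖x‖)) {z : ℝ → E}
    (hz : ∀ t ∈ Icc a b, HasDerivWithinAt z (f t (z t)) (Icc a b) t) :
    ∀ t ∈ Icc a b, ‖z t‖ ≤ gronwallBound ‖z a‖ K K (t - a) :=
  norm_le_gronwallBound_of_norm_deriv_right_le (fun t ht => (hz t ht).continuousWithinAt)
    (fun t ht => (hz t (Ico_subset_Icc_self ht)).mono_of_mem_nhdsWithin
      (Icc_mem_nhdsGE_of_mem ht)) le_rfl
    (fun t ht => (hf t (Ico_subset_Icc_self ht) _).trans_eq (by ring))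

theorem contDiffOn_one_of_hasDerivWithinAt {s : Set ℝ} (hs : UniqueDiffOn ℝ s)
    {z z' : ℝ → E} (hz : ∀ t ∈ s, HasDerivWithinAt z (z' t) s t) (hz' : ContinuousOn z' s) :
    ContDiffOn ℝ 1 z s :=
  (contDiffOn_one_iff_derivWithin hs).2 ⟨fun t ht => (hz t ht).differentiableWithinAt,
    hz'.congr fun t ht => (hz t ht).derivWithin (hs t ht)⟩

variable [CompleteSpace E]

theorem exists_hasDerivWithinAt_of_lipschitzWith (hab : a ≤ b) {f : ℝ → E → E} {K : ℝ≥0}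
    {L : ℝ} (hlip : ∀ t ∈ Icc a b, LipschitzWith K (f t))
    (hcont : ∀ x, ContinuousOn (f · x) (Icc a b))
    (hbound : ∀ t ∈ Icc a b, ∀ x, ‖f t x‖ ≤ L) (x₀ : E) :
    ∃ z : ℝ → E, z a = x₀ ∧
      ∀ t ∈ Icc a b, HasDerivWithinAt z (f t (z t)) (Icc a b) t := by
  have hpl : IsPicardLindelof f (tmin := a) (tmax := b) ⟨a, left_mem_Icc.2 hab⟩ x₀
      (L.toNNReal * (b - a).toNNReal) 0 L.toNNReal K :=
    { lipschitzOnWith := fun t ht => (hlip t ht).lipschitzOnWith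
      continuousOn := fun x _ => hcont x
      norm_le := fun t ht x _ => (hbound t ht x).trans (Real.le_coe_toNNReal L)
      mul_max_le := by simp [hab] }
  exact hpl.exists_eq_forall_mem_Icc_hasDerivWithinAt₀

end Existence

noncomputable def forwardAverage (ε : ℝ) (f : ℝ → ℝ) (y : ℝ) : ℝ :=
  ε⁻¹ * ∫ s in (0 : ℝ)..ε, f (y + s)

section ForwardAverage

variable {ε : ℝ} {f : ℝ → ℝ}

theorem forwardAverage_eq (y : ℝ) :
    forwardAverage ε f y = ε⁻¹ * ∫ u in y..y + ε, f u := by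
  rw [forwardAverage, intervalIntegral.integral_comp_add_left, add_zero]

theorem abs_forwardAverage_sub_le (hε : 0 < ε) (hf : Continuous f) {y c δ : ℝ}
    (h : ∀ s ∈ Icc 0 ε, |f (y + s) - c| ≤ δ) : |forwardAverage ε f y - c| ≤ δ := by
  have hfy : IntervalIntegrable (fun s => f (y + s)) volume 0 ε :=
    (hf.comp (continuous_const_add y)).intervalIntegrable _ _
  have hsub : forwardAverage ε f y - c = ε⁻¹ * ∫ s in (0 : ℝ)..ε, (f (y + s) - c) := by
    rw [intervalIntegral.integral_sub hfy intervalIntegrable_const,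
      intervalIntegral.integral_const, forwardAverage, smul_eq_mul, sub_zero, mul_sub,
      inv_mul_cancel_left₀ hε.ne']
  have hint : ‖∫ s in (0 : ℝ)..ε, (f (y + s) - c)‖ ≤ δ * |ε - 0| :=
    intervalIntegral.norm_integral_le_of_norm_le_const fun s hs =>
      h s (Ioc_subset_Icc_self (uIoc_of_le hε.le ▸ hs))
  rw [Real.norm_eq_abs, sub_zero, abs_of_pos hε] at hint
  rw [hsub, abs_mul, abs_inv, abs_of_pos hε, inv_mul_le_iff₀ hε, mul_comm]
  exact hint

theorem lipschitzWith_forwardAverage (hε : 0 < ε) (hf : Continuous f) {C : ℝ}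
    (hC : ∀ y, |f y| ≤ C) : LipschitzWith (2 * C / ε).toNNReal (forwardAverage ε f) := by
  have hC₀ : 0 ≤ C := (abs_nonneg _).trans (hC 0)
  have hint (u v : ℝ) : |∫ x in u..v, f x| ≤ C * |v - u| :=
    intervalIntegral.norm_integral_le_of_norm_le_const (f := f) fun x _ => hC x
  refine LipschitzWith.of_dist_le_mul fun y₁ y₂ => ?_
  rw [Real.dist_eq, Real.dist_eq, Real.coe_toNNReal _ (by positivity), forwardAverage_eq,
    forwardAverage_eq, ← mul_sub, intervalIntegral.integral_interval_sub_interval_comm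
      (hf.intervalIntegrable _ _) (hf.intervalIntegrable _ _) (hf.intervalIntegrable _ _),
    abs_mul, abs_inv, abs_of_pos hε, div_eq_inv_mul, mul_assoc]
  gcongr
  calc |(∫ x in y₁..y₂, f x) - ∫ x in y₁ + ε..y₂ + ε, f x|
      ≤ C * |y₂ - y₁| + C * |y₂ + ε - (y₁ + ε)| :=
        (abs_sub _ _).trans (add_le_add (hint _ _) (hint _ _))
    _ = 2 * C * |y₁ - y₂| := by rw [add_sub_add_right_eq_sub, abs_sub_comm]; ring

theorem continuous_uncurry_forwardAverage {G : ℝ → ℝ → ℝ} (hG : Continuous (uncurry G))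
    (ε : ℝ) : Continuous (uncurry fun t => forwardAverage ε (G t)) :=
  continuous_const.mul <| intervalIntegral.continuous_parametric_intervalIntegral_of_continuous'
    (f := fun (p : ℝ × ℝ) s => G p.1 (p.2 + s))
    (hG.comp (f := fun q : (ℝ × ℝ) × ℝ => (q.1.1, q.1.2 + q.2)) (by fun_prop)) 0 ε

theorem tendstoUniformly_forwardAverage {G : ℝ → ℝ → ℝ}
    (hG : UniformContinuous (uncurry G))
    {ι : Type*} {l : Filter ι} {ε : ι → ℝ} (hε : Tendsto ε l (𝓝[>] 0)) :
    TendstoUniformly (fun i => uncurry fun t => forwardAverage (ε i) (G t)) (uncurry G) l := by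
  rw [Metric.tendstoUniformly_iff]
  intro δ hδ
  obtain ⟨ζ, hζ, hGζ⟩ := Metric.uniformContinuous_iff.1 hG (δ / 2) (half_pos hδ)
  filter_upwards [hε (Ioo_mem_nhdsGT hζ)] with i hi
  rintro ⟨t, y⟩
  rw [dist_comm, Real.dist_eq]
  refine (abs_forwardAverage_sub_le hi.1 (hG.continuous.uncurry_left t) fun s hs => ?_).trans_lt
    (half_lt_self hδ)
  have hdist : dist (t, y + s) (t, y) < ζ := by
    rw [Prod.dist_eq, dist_self, Real.dist_eq, add_sub_cancel_left, abs_of_nonneg hs.1]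
    exact max_lt hζ (hs.2.trans_lt hi.2)
  exact (Real.dist_eq _ _ ▸ hGζ hdist).le

end ForwardAverage

theorem UniformCauchySeqOn.exists_tendstoUniformlyOn {α β : Type*} [UniformSpace β]
    [CompleteSpace β] [Nonempty β] {Z : ℕ → α → β} {s : Set α}
    (hZ : UniformCauchySeqOn Z atTop s) : ∃ z : α → β, TendstoUniformlyOn Z z atTop s :=
  ⟨fun x => limUnder atTop fun n => Z n x,
    hZ.tendstoUniformlyOn_of_tendsto fun _ hx => (hZ.cauchySeq hx).tendsto_limUnder⟩

section Approximation

variable {a b C : ℝ}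

theorem hasDerivWithinAt_of_tendstoUniformlyOn {E : Type*} [NormedAddCommGroup E]
    [NormedSpace ℝ E] [CompleteSpace E] {F : ℕ → ℝ → E → E} {G : ℝ → E → E}
    (hF : ∀ n, Continuous (uncurry (F n))) (hFC : ∀ n t x, ‖F n t x‖ ≤ C)
    (hFG : TendstoUniformly (fun n => uncurry (F n)) (uncurry G) atTop) {Z : ℕ → ℝ → E}
    (hZ : ∀ n, ∀ t ∈ Icc a b, HasDerivWithinAt (Z n) (F n t (Z n t)) (Icc a b) t)
    {z : ℝ → E} (hZz : TendstoUniformlyOn Z z atTop (Icc a b)) :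
    ∀ t ∈ Icc a b, HasDerivWithinAt z (G t (z t)) (Icc a b) t := by
  have hG : Continuous (uncurry G) := hFG.continuous (Eventually.of_forall hF).frequently
  have hZc (n : ℕ) : ContinuousOn (Z n) (Icc a b) := HasDerivWithinAt.continuousOn (hZ n)
  have hz : ContinuousOn z (Icc a b) :=
    hZz.continuousOn (Eventually.of_forall hZc).frequently
  have hpicard : ∀ t ∈ Icc a b, z t = ODE.picard G a (z a) z t := by
    intro t ht
    have ha : a ∈ Icc a b := ⟨le_rfl, ht.1.trans ht.2⟩
    have hsub : uIcc a t ⊆ Icc a b := uIcc_subset_Icc ha ht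
    have hZt (n : ℕ) : ODE.picard (F n) a (Z n a) (Z n) t = Z n t :=
      ODE.picard_eq_of_hasDerivAt (hF n).continuousOn (fun s hs => (hZ n s (hsub hs)).mono hsub)
        (mapsTo_univ _ _)
    refine tendsto_nhds_unique (hZz.tendsto_at ht) ?_
    simp_rw [← hZt, ODE.picard_apply]
    refine (hZz.tendsto_at ha).add
      (intervalIntegral.tendsto_integral_filter_of_dominated_convergence (fun _ => C) ?_ ?_
        intervalIntegrable_const ?_)
    · exact Eventually.of_forall fun n =>
        ((ODE.continuousOn_comp (hF n).continuousOn (hZc n) (mapsTo_univ _ _)).mono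
          (uIoc_subset_uIcc.trans hsub)).aestronglyMeasurable measurableSet_uIoc
    · exact Eventually.of_forall fun n => ae_of_all _ fun s _ => hFC n s _
    · exact ae_of_all _ fun s hs => hFG.tendsto_comp hG.continuousAt
        (tendsto_const_nhds.prodMk_nhds (hZz.tendsto_at (hsub (uIoc_subset_uIcc hs))))
  intro t ht
  exact (ODE.hasDerivWithinAt_picard_Icc ⟨le_rfl, ht.1.trans ht.2⟩ hG.continuousOn hz
    (fun _ _ => mem_univ _) (z a) ht).congr hpicard (hpicard t ht)

theorem uniformCauchySeqOn_of_tendstoUniformly_of_antitone {F : ℕ → ℝ → ℝ → ℝ}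
    {G : ℝ → ℝ → ℝ} (hFC : ∀ n t y, |F n t y| ≤ C)
    (hFG : TendstoUniformly (fun n => uncurry (F n)) (uncurry G) atTop)
    (hG : ∀ t ∈ Icc a b, Antitone (G t)) {Z : ℕ → ℝ → ℝ} {η : ℝ}
    (hZa : ∀ n, Z n a = η)
    (hZ : ∀ n, ∀ t ∈ Icc a b, HasDerivWithinAt (Z n) (F n t (Z n t)) (Icc a b) t) :
    UniformCauchySeqOn Z atTop (Icc a b) := by
  have hC : 0 ≤ C := (abs_nonneg _).trans (hFC 0 0 0)
  set R := 2 * C * (b - a)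
  have hdrift (n : ℕ) (t : ℝ) (ht : t ∈ Icc a b) : |Z n t - η| ≤ C * (b - a) :=
    hZa n ▸ (norm_image_sub_le_of_norm_deriv_le_segment' (hZ n)
      (fun s _ => hFC n s _) t ht).trans (by gcongr; exact ht.2)
  have hR (m n : ℕ) (t : ℝ) (ht : t ∈ Icc a b) : |Z m t - Z n t| ≤ R :=
    (abs_sub_le _ η _).trans (by rw [abs_sub_comm η]; linarith [hdrift m t ht, hdrift n t ht])
  rw [Metric.uniformCauchySeqOn_iff]
  intro ε hε
  obtain ⟨δ, hδ, hδε⟩ := exists_pos_mul_lt (pow_pos hε 2) (4 * R * (b - a))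
  obtain ⟨N, hN⟩ := eventually_atTop.1 (Metric.tendstoUniformly_iff.1 hFG δ hδ)
  have hclose {n : ℕ} (hn : N ≤ n) (s y : ℝ) : |F n s y - G s y| ≤ δ := by
    rw [← Real.dist_eq, dist_comm]; exact (hN n hn (s, y)).le
  refine ⟨N, fun m hm n hn t ht => ?_⟩
  have hsq := sq_norm_sub_le_of_inner_sub_deriv_le (hZ m) (hZ n) (by rw [hZa, hZa])
    (c := 2 * R * δ) (fun s hs => (Real.inner_apply _ _).trans_le <| mul_sub_le_of_antitone
      (hG s (Ico_subset_Icc_self hs)) (hclose hm _ _) (hclose hn _ _)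
      (hR m n s (Ico_subset_Icc_self hs))) t ht
  rw [Real.norm_eq_abs, sq_abs] at hsq
  have hRδ : 0 ≤ R * δ := mul_nonneg ((abs_nonneg _).trans (hR m n t ht)) hδ.le
  rw [Real.dist_eq]
  exact abs_lt_of_sq_lt_sq (by nlinarith [ht.2]) hε.le

theorem exists_hasDerivWithinAt_of_antitone (hab : a ≤ b) (η : ℝ) {G : ℝ → ℝ → ℝ}
    (hG : UniformContinuous (uncurry G)) (hGC : ∀ t y, |G t y| ≤ C)
    (hGa : ∀ t ∈ Icc a b, Antitone (G t)) :
    ∃ z : ℝ → ℝ, z a = η ∧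
      ∀ t ∈ Icc a b, HasDerivWithinAt z (G t (z t)) (Icc a b) t := by
  set ε : ℕ → ℝ := fun n => 1 / (n + 1)
  have hε_pos (n : ℕ) : 0 < ε n := Nat.one_div_pos_of_nat
  have hε : Tendsto ε atTop (𝓝[>] 0) := tendsto_nhdsWithin_iff.2
    ⟨tendsto_one_div_add_atTop_nhds_zero_nat, Eventually.of_forall hε_pos⟩
  set F : ℕ → ℝ → ℝ → ℝ := fun n t => forwardAverage (ε n) (G t)
  have hGt (t : ℝ) : Continuous (G t) := hG.continuous.uncurry_left t
  have hF (n : ℕ) : Continuous (uncurry (F n)) :=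
    continuous_uncurry_forwardAverage hG.continuous (ε n)
  have hFC (n : ℕ) (t y : ℝ) : |F n t y| ≤ C := by
    simpa using abs_forwardAverage_sub_le (hε_pos n) (hGt t) (c := 0) fun s _ => by
      simpa using hGC t (y + s)
  have hFG := tendstoUniformly_forwardAverage hG hε
  choose Z hZa hZ using fun n => exists_hasDerivWithinAt_of_lipschitzWith hab (f := F n)
    (fun t _ => lipschitzWith_forwardAverage (hε_pos n) (hGt t) (hGC t))
    (fun y => ((hF n).comp (continuous_id.prodMk continuous_const)).continuousOn)
    (fun t _ y => hFC n t y) η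
  obtain ⟨z, hz⟩ := UniformCauchySeqOn.exists_tendstoUniformlyOn
    (uniformCauchySeqOn_of_tendstoUniformly_of_antitone hFC hFG hGa hZa hZ)
  refine ⟨z, tendsto_nhds_unique (hz.tendsto_at (left_mem_Icc.2 hab)) ?_,
    hasDerivWithinAt_of_tendstoUniformlyOn hF hFC hFG hZ hz⟩
  simp only [hZa, tendsto_const_nhds]

end Approximation

theorem abs_projIcc_neg_le {M : ℝ} (hM : -M ≤ M) (y : ℝ) :
    |(projIcc (-M) M hM y : ℝ)| ≤ |y| := by
  have hM₀ : 0 ≤ M := by linarith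
  rw [coe_projIcc, abs_le]
  exact ⟨le_max_of_le_right (le_min (by linarith [abs_nonneg y]) (neg_abs_le y)),
    max_le (by linarith [abs_nonneg y]) (min_le_right _ _ |>.trans (le_abs_self y))⟩

theorem uniformContinuous_uncurry_projIcc {a b c d : ℝ} (hab : a ≤ b) (hcd : c ≤ d)
    {g : ℝ → ℝ → ℝ} (hg : ContinuousOn (uncurry g) (Icc a b ×ˢ Icc c d)) :
    UniformContinuous (uncurry fun t y => g (projIcc a b hab t) (projIcc c d hcd y)) := by
  have hu := (isCompact_Icc.prod isCompact_Icc).uniformContinuousOn_of_continuous hg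
  rw [uniformContinuousOn_iff_restrict] at hu
  have hproj {a b : ℝ} (hab : a ≤ b) : UniformContinuous fun t => (projIcc a b hab t : ℝ) :=
    uniformContinuous_subtype_val.comp (LipschitzWith.projIcc hab).uniformContinuous
  exact hu.comp (((hproj hab).prodMap (hproj hcd)).subtype_mk fun p =>
    ⟨(projIcc a b hab p.1).2, (projIcc c d hcd p.2).2⟩)

/-- Existence and uniqueness of a C¹ solution of z' = g(t, z(t)), z(a) = η on [a,b],
under continuity, linear growth and monotonicity of g. -/
theorem stmt_0 (a b η K : ℝ) (hab : a < b) (hK : 0 < K)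
    (g : ℝ → ℝ → ℝ)
    (hg_cont : ContinuousOn (fun p : ℝ × ℝ => g p.1 p.2) (Icc a b ×ˢ (univ : Set ℝ)))
    (hg_growth : ∀ t ∈ Icc a b, ∀ y : ℝ, |g t y| ≤ K * (1 + |y|))
    (hg_mono : ∀ t ∈ Icc a b, ∀ y₁ y₂ : ℝ, (y₁ - y₂) * (g t y₁ - g t y₂) ≤ 0) :
    ∃ z : ℝ → ℝ, (ContDiffOn ℝ 1 z (Icc a b) ∧ z a = η ∧
        ∀ t ∈ Icc a b, HasDerivWithinAt z (g t (z t)) (Icc a b) t) ∧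
      ∀ x : ℝ → ℝ, (ContDiffOn ℝ 1 x (Icc a b) ∧ x a = η ∧
        ∀ t ∈ Icc a b, HasDerivWithinAt x (g t (x t)) (Icc a b) t) →
        ∀ t ∈ Icc a b, x t = z t := by
  set M := gronwallBound |η| K K (b - a)
  have hM_mono : Monotone (gronwallBound |η| K K) :=
    gronwallBound_mono (abs_nonneg η) hK.le hK.le
  have hM : -M ≤ M := by
    have := hM_mono (sub_nonneg.2 hab.le)
    rw [gronwallBound_x0] at this
    linarith [abs_nonneg η]
  set G : ℝ → ℝ → ℝ := fun t y => g (projIcc a b hab.le t) (projIcc (-M) M hM y)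
  have hG_growth : ∀ t ∈ Icc a b, ∀ y, |G t y| ≤ K * (1 + |y|) := fun t ht y => by
    simp only [G, projIcc_of_mem _ ht]
    exact (hg_growth t ht _).trans
      (mul_le_mul_of_nonneg_left (by linarith [abs_projIcc_neg_le hM y]) hK.le)
  obtain ⟨z, hza, hz⟩ := exists_hasDerivWithinAt_of_antitone hab.le η (C := K * (1 + M))
    (uniformContinuous_uncurry_projIcc hab.le hM (hg_cont.mono (prod_mono_right (subset_univ _))))
    (fun t y => (hg_growth _ (projIcc a b hab.le t).2 _).trans
      (by gcongr; exact abs_le.2 (projIcc (-M) M hM y).2))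
    (fun t _ => (antitone_iff_forall_mul_sub_nonpos.2 (hg_mono _ (projIcc a b hab.le t).2))
      |>.comp_monotone (Subtype.mono_coe _ |>.comp (monotone_projIcc hM)))
  have hzM (t : ℝ) (ht : t ∈ Icc a b) : z t ∈ Icc (-M) M := abs_le.1 <|
    (norm_le_gronwallBound_of_norm_le_mul_one_add hG_growth hz t ht).trans
      (hza ▸ hM_mono (by linarith [ht.2]))
  have hz' (t : ℝ) (ht : t ∈ Icc a b) : HasDerivWithinAt z (g t (z t)) (Icc a b) t := by
    simpa [G, projIcc_of_mem _ ht, projIcc_of_mem _ (hzM t ht)] using hz t ht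
  refine ⟨z, ⟨contDiffOn_one_of_hasDerivWithinAt (uniqueDiffOn_Icc hab) hz'
    (ODE.continuousOn_comp hg_cont (HasDerivWithinAt.continuousOn hz') (mapsTo_univ _ _)),
    hza, hz'⟩, fun x ⟨_, hxa, hx⟩ => ?_⟩
  exact eqOn_of_hasDerivWithinAt_of_inner_sub_nonpos
    (fun t ht x y => (Real.inner_apply _ _).trans_le (hg_mono t (Ico_subset_Icc_self ht) x y))
    hx hz' (hxa.trans hza.symm)
end

section
/- With f̃ as defined (f̃(t,y,z) = A(t) − B(t)·sgn(y)|y| − C(t)·sgn(y)|y|^ϱ·|z|, A, B, C bounded, Hölder with exponent α and constant H), f̃ satisfies the Hölder-type estimate |f̃(t₁,y₁,z₁)−f̃(t₂,y₂,z₂)| ≤ L[(1+|y₁|+|y₂|)(1+|z₁|+|z₂|)|t₁−t₂|^α + |y₁−y₂| + (1+|z₁|+|z₂|)|y₁−y₂|^ϱ + (1+|y₁|+|y₂|)|z₁−z₂|] with L = max{3H, ‖B‖_∞, 2‖C‖_∞}. -/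
open Set

lemma rpow_subadd (x y p : ℝ) (hx : 0 ≤ x) (hy : 0 ≤ y) (hp : 0 ≤ p) (hp1 : p ≤ 1) :
    (x + y) ^ p ≤ x ^ p + y ^ p := by
  have h := NNReal.rpow_add_le_add_rpow x.toNNReal y.toNNReal hp hp1
  rw [← Real.coe_toNNReal x hx, ← Real.coe_toNNReal y hy, ← NNReal.coe_add,
    ← NNReal.coe_rpow, ← NNReal.coe_rpow, ← NNReal.coe_rpow, ← NNReal.coe_add, NNReal.coe_le_coe]
  exact h

lemma rpow_diff_le {p a b : ℝ} (hb : 0 ≤ b) (hba : b ≤ a) (hp : 0 ≤ p) (hp1 : p ≤ 1) :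
    a ^ p - b ^ p ≤ (a - b) ^ p := by
  have h := rpow_subadd (a - b) b p (by linarith) hb hp hp1
  rw [sub_add_cancel] at h
  linarith

lemma rpow_abs_diff {p a b : ℝ} (ha : 0 ≤ a) (hb : 0 ≤ b) (hp : 0 ≤ p) (hp1 : p ≤ 1) :
    |a ^ p - b ^ p| ≤ |a - b| ^ p := by
  rcases le_total b a with h | h
  · rw [abs_of_nonneg (by linarith [Real.rpow_le_rpow hb h hp]),
      abs_of_nonneg (by linarith)]
    exact rpow_diff_le hb h hp hp1
  · rw [abs_of_nonpos (by linarith [Real.rpow_le_rpow ha h hp]),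
      abs_of_nonpos (by linarith), neg_sub, neg_sub]
    exact rpow_diff_le ha h hp hp1

lemma sgn_rpow_diff (sgn : ℝ → ℝ)
    (hsgn : ∀ x : ℝ, (0 ≤ x → sgn x = 1) ∧ (x < 0 → sgn x = -1))
    {ϱ : ℝ} (hϱ : 0 ≤ ϱ) (hϱ1 : ϱ ≤ 1) (a b : ℝ) :
    |sgn a * |a| ^ ϱ - sgn b * |b| ^ ϱ| ≤ 2 * |a - b| ^ ϱ := by
  have h2 : (0:ℝ) ≤ |a - b| ^ ϱ := Real.rpow_nonneg (abs_nonneg _) _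
  rcases le_or_gt 0 a with ha | ha <;> rcases le_or_gt 0 b with hb | hb
  · rw [(hsgn a).1 ha, (hsgn b).1 hb, one_mul, one_mul, abs_of_nonneg ha, abs_of_nonneg hb]
    have := rpow_abs_diff ha hb hϱ hϱ1
    linarith
  · rw [(hsgn a).1 ha, (hsgn b).2 hb, abs_of_nonneg ha, abs_of_neg hb]
    have e : 1 * a ^ ϱ - -1 * (-b) ^ ϱ = a ^ ϱ + (-b) ^ ϱ := by ring
    rw [e, abs_of_nonneg (add_nonneg (Real.rpow_nonneg ha _) (Real.rpow_nonneg (by linarith) _)),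
      abs_of_nonneg (by linarith)]
    have h1 := Real.rpow_le_rpow ha (by linarith : a ≤ a - b) hϱ
    have h2 := Real.rpow_le_rpow (by linarith : (0:ℝ) ≤ -b) (by linarith : -b ≤ a - b) hϱ
    linarith
  · rw [(hsgn a).2 ha, (hsgn b).1 hb, abs_of_neg ha, abs_of_nonneg hb]
    have e : -1 * (-a) ^ ϱ - 1 * b ^ ϱ = -((-a) ^ ϱ + b ^ ϱ) := by ring
    rw [e, abs_neg,
      abs_of_nonneg (add_nonneg (Real.rpow_nonneg (by linarith) _) (Real.rpow_nonneg hb _)),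
      abs_of_neg (by linarith : a - b < 0)]
    have h1 := Real.rpow_le_rpow (by linarith : (0:ℝ) ≤ -a) (by linarith : -a ≤ -(a - b)) hϱ
    have h2 := Real.rpow_le_rpow hb (by linarith : b ≤ -(a - b)) hϱ
    linarith
  · rw [(hsgn a).2 ha, (hsgn b).2 hb, abs_of_neg ha, abs_of_neg hb]
    have e : -1 * (-a) ^ ϱ - -1 * (-b) ^ ϱ = -((-a) ^ ϱ - (-b) ^ ϱ) := by ring
    rw [e, abs_neg]
    have := rpow_abs_diff (by linarith : (0:ℝ) ≤ -a) (by linarith : (0:ℝ) ≤ -b) hϱ hϱ1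
    have e2 : |-a - -b| = |a - b| := by rw [show -a - -b = -(a-b) by ring, abs_neg]
    rw [e2] at this
    linarith

lemma abs_rpow_le_one_add {ϱ : ℝ} (hϱ : 0 ≤ ϱ) (hϱ1 : ϱ ≤ 1) (x : ℝ) :
    |x| ^ ϱ ≤ 1 + |x| := by
  rcases le_total |x| 1 with h | h
  · have := Real.rpow_le_one (abs_nonneg x) h hϱ
    linarith [abs_nonneg x]
  · calc |x| ^ ϱ ≤ |x| ^ (1:ℝ) := Real.rpow_le_rpow_of_exponent_le h hϱ1
      _ = |x| := Real.rpow_one _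
      _ ≤ 1 + |x| := by linarith

/-- Hölder-type estimate for f̃(t,y,z) = A(t) - B(t)·sgn(y)|y| - C(t)·sgn(y)|y|^ϱ·|z|,
with L = max{3H, ‖B‖∞, 2‖C‖∞}. -/
theorem stmt_7 (A B C : ℝ → ℝ) (H α ϱ nA nB nC : ℝ)
    (hH : 0 ≤ H) (hα : 0 < α) (hα1 : α ≤ 1) (hϱ : 0 < ϱ) (hϱ1 : ϱ ≤ 1)
    (hA_pos : ∀ t ≥ (0:ℝ), 0 ≤ A t) (hB_pos : ∀ t ≥ (0:ℝ), 0 ≤ B t)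
    (hC_pos : ∀ t ≥ (0:ℝ), 0 ≤ C t)
    (hA_bd : ∀ t ≥ (0:ℝ), A t ≤ nA) (hB_bd : ∀ t ≥ (0:ℝ), B t ≤ nB)
    (hC_bd : ∀ t ≥ (0:ℝ), C t ≤ nC)
    (hA_hold : ∀ t₁ ≥ (0:ℝ), ∀ t₂ ≥ (0:ℝ), |A t₁ - A t₂| ≤ H * |t₁ - t₂| ^ α)
    (hB_hold : ∀ t₁ ≥ (0:ℝ), ∀ t₂ ≥ (0:ℝ), |B t₁ - B t₂| ≤ H * |t₁ - t₂| ^ α)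
    (hC_hold : ∀ t₁ ≥ (0:ℝ), ∀ t₂ ≥ (0:ℝ), |C t₁ - C t₂| ≤ H * |t₁ - t₂| ^ α)
    (sgn : ℝ → ℝ) (hsgn : ∀ x : ℝ, (0 ≤ x → sgn x = 1) ∧ (x < 0 → sgn x = -1))
    (f : ℝ → ℝ → ℝ → ℝ)
    (hf : ∀ t y z, f t y z = A t - B t * sgn y * |y| - C t * sgn y * |y| ^ ϱ * |z|)
    (L : ℝ) (hL : L = max (3 * H) (max nB (2 * nC))) :
    ∀ t₁ ≥ (0:ℝ), ∀ t₂ ≥ (0:ℝ), ∀ y₁ y₂ z₁ z₂ : ℝ,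
      |f t₁ y₁ z₁ - f t₂ y₂ z₂| ≤
        L * ((1 + |y₁| + |y₂|) * (1 + |z₁| + |z₂|) * |t₁ - t₂| ^ α
          + |y₁ - y₂|
          + (1 + |z₁| + |z₂|) * |y₁ - y₂| ^ ϱ
          + (1 + |y₁| + |y₂|) * |z₁ - z₂|) := by
  intro t₁ ht₁ t₂ ht₂ y₁ y₂ z₁ z₂
  -- basic facts
  have hnB : 0 ≤ nB := le_trans (hB_pos 0 le_rfl) (hB_bd 0 le_rfl)
  have hnC : 0 ≤ nC := le_trans (hC_pos 0 le_rfl) (hC_bd 0 le_rfl)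
  have hL3H : 3 * H ≤ L := hL ▸ le_max_left _ _
  have hLnB : nB ≤ L := hL ▸ le_trans (le_max_left _ _) (le_max_right _ _)
  have hL2nC : 2 * nC ≤ L := hL ▸ le_trans (le_max_right _ _) (le_max_right _ _)
  have hL0 : 0 ≤ L := le_trans (by linarith) hL3H
  have syy : ∀ y : ℝ, sgn y * |y| = y := by
    intro y
    rcases le_or_gt 0 y with h | h
    · rw [(hsgn y).1 h, one_mul, abs_of_nonneg h]
    · rw [(hsgn y).2 h, abs_of_neg h]; ring
  have hsgn_abs : ∀ x : ℝ, |sgn x| = 1 := by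
    intro x
    rcases le_or_gt 0 x with h | h
    · rw [(hsgn x).1 h, abs_one]
    · rw [(hsgn x).2 h, abs_neg, abs_one]
  have hG_abs : ∀ x : ℝ, |sgn x * |x| ^ ϱ| = |x| ^ ϱ := by
    intro x
    rw [abs_mul, hsgn_abs, one_mul, abs_of_nonneg (Real.rpow_nonneg (abs_nonneg x) ϱ)]
  set D := |t₁ - t₂| ^ α with hD
  have hD0 : 0 ≤ D := Real.rpow_nonneg (abs_nonneg _) _
  set G₁ := sgn y₁ * |y₁| ^ ϱ with hG₁
  set G₂ := sgn y₂ * |y₂| ^ ϱ with hG₂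
  have hdecomp : f t₁ y₁ z₁ - f t₂ y₂ z₂ =
      (A t₁ - A t₂) - (B t₁ - B t₂) * y₁ - B t₂ * (y₁ - y₂)
        - (C t₁ - C t₂) * G₁ * |z₁| - C t₂ * ((G₁ - G₂) * |z₁|)
        - C t₂ * G₂ * (|z₁| - |z₂|) := by
    rw [hf, hf, show B t₁ * sgn y₁ * |y₁| = B t₁ * y₁ by rw [mul_assoc, syy],
      show B t₂ * sgn y₂ * |y₂| = B t₂ * y₂ by rw [mul_assoc, syy], hG₁, hG₂]
    ring
  have tri : ∀ a b c d e g : ℝ, |a - b - c - d - e - g| ≤ |a| + |b| + |c| + |d| + |e| + |g| := by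
    intro a b c d e g
    calc |a - b - c - d - e - g| ≤ |a - b - c - d - e| + |g| := abs_sub _ _
      _ ≤ |a - b - c - d| + |e| + |g| := by linarith [abs_sub (a - b - c - d) e]
      _ ≤ |a - b - c| + |d| + |e| + |g| := by linarith [abs_sub (a - b - c) d]
      _ ≤ |a - b| + |c| + |d| + |e| + |g| := by linarith [abs_sub (a - b) c]
      _ ≤ |a| + |b| + |c| + |d| + |e| + |g| := by linarith [abs_sub a b]
  -- individual bounds
  have b1 : |A t₁ - A t₂| ≤ H * D := hA_hold t₁ ht₁ t₂ ht₂
  have b2 : |(B t₁ - B t₂) * y₁| ≤ H * D * |y₁| := by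
    rw [abs_mul]
    exact mul_le_mul_of_nonneg_right (hB_hold t₁ ht₁ t₂ ht₂) (abs_nonneg _)
  have b3 : |B t₂ * (y₁ - y₂)| ≤ nB * |y₁ - y₂| := by
    rw [abs_mul, abs_of_nonneg (hB_pos t₂ ht₂)]
    exact mul_le_mul_of_nonneg_right (hB_bd t₂ ht₂) (abs_nonneg _)
  have hpow1 : |y₁| ^ ϱ ≤ 1 + |y₁| := abs_rpow_le_one_add hϱ.le hϱ1 y₁
  have hpow2 : |y₂| ^ ϱ ≤ 1 + |y₂| := abs_rpow_le_one_add hϱ.le hϱ1 y₂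
  have b4 : abs ((C t₁ - C t₂) * G₁ * |z₁|) ≤ H * D * (1 + |y₁|) * |z₁| := by
    rw [abs_mul, abs_mul, abs_abs, hG₁, hG_abs]
    have h1 : |C t₁ - C t₂| * |y₁| ^ ϱ ≤ H * D * (1 + |y₁|) :=
      mul_le_mul (hC_hold t₁ ht₁ t₂ ht₂) hpow1 (Real.rpow_nonneg (abs_nonneg _) _)
        (by positivity)
    exact mul_le_mul_of_nonneg_right h1 (abs_nonneg _)
  have b5 : |C t₂ * ((G₁ - G₂) * |z₁|)| ≤ nC * (2 * |y₁ - y₂| ^ ϱ * |z₁|) := by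
    rw [abs_mul, abs_mul, abs_abs, abs_of_nonneg (hC_pos t₂ ht₂)]
    have h1 : |G₁ - G₂| ≤ 2 * |y₁ - y₂| ^ ϱ := sgn_rpow_diff sgn hsgn hϱ.le hϱ1 y₁ y₂
    have h2 : |G₁ - G₂| * |z₁| ≤ 2 * |y₁ - y₂| ^ ϱ * |z₁| :=
      mul_le_mul_of_nonneg_right h1 (abs_nonneg _)
    exact mul_le_mul (hC_bd t₂ ht₂) h2 (by positivity) hnC
  have b6 : |C t₂ * G₂ * (|z₁| - |z₂|)| ≤ nC * (1 + |y₂|) * |z₁ - z₂| := by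
    rw [abs_mul, abs_mul, abs_of_nonneg (hC_pos t₂ ht₂), hG₂, hG_abs]
    have h1 : C t₂ * |y₂| ^ ϱ ≤ nC * (1 + |y₂|) :=
      mul_le_mul (hC_bd t₂ ht₂) hpow2 (Real.rpow_nonneg (abs_nonneg _) _) hnC
    have h2 : abs (|z₁| - |z₂|) ≤ |z₁ - z₂| := abs_abs_sub_abs_le_abs_sub z₁ z₂
    exact mul_le_mul h1 h2 (abs_nonneg _) (by positivity)
  -- combine
  have hsum := tri (A t₁ - A t₂) ((B t₁ - B t₂) * y₁) (B t₂ * (y₁ - y₂))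
    ((C t₁ - C t₂) * G₁ * |z₁|) (C t₂ * ((G₁ - G₂) * |z₁|)) (C t₂ * G₂ * (|z₁| - |z₂|))
  rw [← hdecomp] at hsum
  -- final comparison
  have ay1 := abs_nonneg y₁; have ay2 := abs_nonneg y₂
  have az1 := abs_nonneg z₁; have az2 := abs_nonneg z₂
  have ady := abs_nonneg (y₁ - y₂); have adz := abs_nonneg (z₁ - z₂)
  have adyp : (0:ℝ) ≤ |y₁ - y₂| ^ ϱ := Real.rpow_nonneg ady _
  have c1 : H * D + H * D * |y₁| + H * D * (1 + |y₁|) * |z₁|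
      ≤ L * ((1 + |y₁| + |y₂|) * (1 + |z₁| + |z₂|) * D) := by
    have e1 : (1 + |y₁|) * (1 + |z₁|) ≤ (1 + |y₁| + |y₂|) * (1 + |z₁| + |z₂|) := by nlinarith
    have e2 : H * ((1 + |y₁|) * (1 + |z₁|)) ≤ L * ((1 + |y₁| + |y₂|) * (1 + |z₁| + |z₂|)) :=
      mul_le_mul (by linarith) e1 (by positivity) hL0
    have e3 := mul_le_mul_of_nonneg_right e2 hD0
    linarith
  have c2 : nB * |y₁ - y₂| ≤ L * |y₁ - y₂| := mul_le_mul_of_nonneg_right hLnB ady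
  have c3 : nC * (2 * |y₁ - y₂| ^ ϱ * |z₁|) ≤ L * ((1 + |z₁| + |z₂|) * |y₁ - y₂| ^ ϱ) := by
    have e1 : 2 * nC * (|y₁ - y₂| ^ ϱ * |z₁|) ≤ L * (|y₁ - y₂| ^ ϱ * |z₁|) :=
      mul_le_mul_of_nonneg_right hL2nC (mul_nonneg adyp az1)
    have e2 := mul_nonneg hL0 adyp
    have e3 := mul_nonneg hL0 (mul_nonneg adyp az2)
    linarith
  have c4 : nC * (1 + |y₂|) * |z₁ - z₂| ≤ L * ((1 + |y₁| + |y₂|) * |z₁ - z₂|) := by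
    have : nC * (1 + |y₂|) ≤ L * (1 + |y₁| + |y₂|) :=
      mul_le_mul (by linarith) (by linarith) (by linarith) hL0
    have e1 := mul_le_mul_of_nonneg_right this adz
    linarith
  calc |f t₁ y₁ z₁ - f t₂ y₂ z₂| ≤ _ := hsum
    _ ≤ L * ((1 + |y₁| + |y₂|) * (1 + |z₁| + |z₂|) * D + |y₁ - y₂|
        + (1 + |z₁| + |z₂|) * |y₁ - y₂| ^ ϱ + (1 + |y₁| + |y₂|) * |z₁ - z₂|) := by
      rw [mul_add, mul_add, mul_add]
      linarith
end

section
/- Let g satisfy (G1)–(G3) on [t_k, t_{k+1}] (continuity, linear growth with constant K, monotone decreasing in y). If z_k solves z_k' = g(t, z_k), z_k(t_k) = y_k on [t_k, t_{k+1}] with |y_k| ≤ M, then for all t in [t_k, t_{k+1}], |z_k(t) − y_k| ≤ h·K·(1 + (M + K h)e^{K h}) where h = t_{k+1} − t_k. -/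
open Set

/-- Local solution bound: if z solves z' = g(t,z), z(t_k) = y_k on [t_k, t_{k+1}] with
|y_k| ≤ M, and g is continuous, of linear growth with constant K, and monotone decreasing
in y, then |z(t) - y_k| ≤ h·K·(1 + (M + Kh)e^{Kh}) for all t in [t_k, t_{k+1}]. -/
theorem stmt_13 (tk tk1 K M yk : ℝ) (htk : tk < tk1) (hK : 0 < K) (hM : 0 ≤ M)
    (h : ℝ) (hh : h = tk1 - tk)
    (g : ℝ → ℝ → ℝ)
    (hg_cont : ContinuousOn (fun p : ℝ × ℝ => g p.1 p.2) (Icc tk tk1 ×ˢ (univ : Set ℝ)))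
    (hg_growth : ∀ t ∈ Icc tk tk1, ∀ y : ℝ, |g t y| ≤ K * (1 + |y|))
    (hg_mono : ∀ t ∈ Icc tk tk1, ∀ y₁ y₂ : ℝ, (y₁ - y₂) * (g t y₁ - g t y₂) ≤ 0)
    (z : ℝ → ℝ) (hz_init : z tk = yk) (hyk : |yk| ≤ M)
    (hz : ∀ t ∈ Icc tk tk1, HasDerivWithinAt z (g t (z t)) (Icc tk tk1) t) :
    ∀ t ∈ Icc tk tk1, |z t - yk| ≤ h * K * (1 + (M + K * h) * Real.exp (K * h)) := by
  have hh0 : 0 < h := by rw [hh]; linarith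
  have hzc : ContinuousOn z (Icc tk tk1) := fun t ht =>
    (hz t ht).continuousWithinAt
  -- Grönwall bound on |z|
  have hgron : ∀ t ∈ Icc tk tk1, ‖z t‖ ≤ gronwallBound M K K (t - tk) := by
    apply norm_le_gronwallBound_of_norm_deriv_right_le hzc
    · intro t ht
      have ht' : t ∈ Icc tk tk1 := Ico_subset_Icc_self ht
      exact (hz t ht').mono_of_mem_nhdsWithin (Icc_mem_nhdsGE_of_mem ht)
    · simpa [hz_init] using hyk
    · intro t ht
      have := hg_growth t (Ico_subset_Icc_self ht) (z t)
      simp only [Real.norm_eq_abs]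
      linarith
  -- hence |z t| ≤ (M + K h) e^{K h}
  set B : ℝ := (M + K * h) * Real.exp (K * h) with hB
  have hzB : ∀ t ∈ Icc tk tk1, |z t| ≤ B := by
    intro t ht
    have h1 := hgron t ht
    rw [gronwallBound_of_K_ne_0 (ne_of_gt hK)] at h1
    have hτh : t - tk ≤ h := by rw [hh]; linarith [ht.2]
    have hτ0 : 0 ≤ t - tk := by linarith [ht.1]
    have he1 : Real.exp (K * (t - tk)) ≤ Real.exp (K * h) :=
      Real.exp_le_exp.2 (by nlinarith)
    have he2 : Real.exp (K * h) - 1 ≤ K * h * Real.exp (K * h) := by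
      have := Real.add_one_le_exp (-(K * h))
      have hp := Real.exp_pos (K * h)
      have : Real.exp (-(K * h)) * Real.exp (K * h) = 1 := by
        rw [← Real.exp_add]; simp
      nlinarith
    have hep : 0 < Real.exp (K * (t - tk)) := Real.exp_pos _
    have hfield : K / K * (Real.exp (K * (t - tk)) - 1)
        = Real.exp (K * (t - tk)) - 1 := by
      field_simp
    simp only [Real.norm_eq_abs] at h1
    rw [hfield] at h1
    have : Real.exp (K * (t - tk)) - 1 ≤ K * h * Real.exp (K * h) := by
      nlinarith
    rw [hB]; nlinarith
  -- derivative bound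
  set C : ℝ := K * (1 + B) with hC
  have hderivC : ∀ t ∈ Icc tk tk1, ‖g t (z t)‖ ≤ C := by
    intro t ht
    have h1 := hg_growth t ht (z t)
    have h2 := hzB t ht
    rw [Real.norm_eq_abs, hC]
    nlinarith
  intro t ht
  have key := (convex_Icc tk tk1).norm_image_sub_le_of_norm_hasDerivWithin_le
    (fun x hx => hz x hx) hderivC (left_mem_Icc.2 htk.le) ht
  rw [Real.norm_eq_abs, Real.norm_eq_abs, hz_init] at key
  have habs : |t - tk| ≤ h := by
    rw [abs_of_nonneg (by linarith [ht.1]), hh]; linarith [ht.2]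
  calc |z t - yk| ≤ C * |t - tk| := key
    _ ≤ C * h := by
        apply mul_le_mul_of_nonneg_left habs
        rw [hC]; positivity
    _ = h * K * (1 + B) := by rw [hC]; ring
end

section
/- Lower bound forcing existence of t_cr: let A₁, A₂ : [0,∞) → ℝ be continuous with A₁(t) ∈ [α₁,β₁] and A₂(t) ∈ [α₂,β₂] where 0 < αᵢ ≤ βᵢ, and let ρ solve ρ'(t) = A₁(t) − A₂(t)ρ(t), ρ(0)=ρ₀ ≥ 0. Then limsup_{t→∞} ρ(t) ≥ α₁/β₂; in particular, if ρ_cr < α₁/β₂ and ρ₀ < ρ_cr, there exists a finite t_cr > 0 with ρ(t_cr) = ρ_cr. -/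
open Set intervalIntegral

/-!
With `I(t) = ∫₀ᵗ A₂`, the variation-of-constants formula is monotone in the forcing term `A₁`, and
for the forcing `m • A₂` it equals `m + e^{-I(t)} (ρ₀ - m)`, which relaxes to the equilibrium `m`
since `I(t) ≥ α₂ t`. Comparing `A₁` with `(α₁/β₂) • A₂` from below and with `(β₁/α₂) • A₂` from
above traps `ρ` eventually between two functions tending to `α₁/β₂` and `β₁/α₂`. The lower one gives
the bound on the limsup and, by the intermediate value theorem, a time where `ρ = ρ_cr`; the upper
one is needed only to make `ρ` bounded above, without which Lean's `limsup` is a junk value.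
-/

open Filter Topology Real

/-- The variation-of-constants solution of `x' = b(t) - a(t) x`, `x(0) = x₀`. -/
noncomputable def varConstSol (a b : ℝ → ℝ) (x₀ t : ℝ) : ℝ :=
  exp (-(∫ s in (0:ℝ)..t, a s)) * (x₀ + ∫ s in (0:ℝ)..t, exp (∫ u in (0:ℝ)..s, a u) * b s)

section VarConstSol

variable {a : ℝ → ℝ} (ha : Continuous a)
include ha

theorem integral_exp_integral_mul_eq (t : ℝ) :
    ∫ s in (0:ℝ)..t, exp (∫ u in (0:ℝ)..s, a u) * a s = exp (∫ u in (0:ℝ)..t, a u) - 1 := by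
  have hI : ∀ s, HasDerivAt (fun s => ∫ u in (0:ℝ)..s, a u) (a s) s := fun s =>
    (ha.integral_hasStrictDerivAt 0 s).hasDerivAt
  have hE : Continuous fun s => exp (∫ u in (0:ℝ)..s, a u) :=
    continuous_exp.comp (continuous_primitive (fun _ _ => ha.intervalIntegrable _ _) (0:ℝ))
  rw [integral_eq_sub_of_hasDerivAt (fun s _ => (hI s).exp) ((hE.mul ha).intervalIntegrable 0 t)]
  simp

theorem varConstSol_const_mul (m x₀ t : ℝ) :
    varConstSol a (fun s => m * a s) x₀ t = m + exp (-(∫ s in (0:ℝ)..t, a s)) * (x₀ - m) := by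
  have hE : exp (-(∫ s in (0:ℝ)..t, a s)) * exp (∫ s in (0:ℝ)..t, a s) = 1 := by
    rw [← exp_add, neg_add_cancel, exp_zero]
  simp only [varConstSol, mul_left_comm _ m, integral_const_mul, integral_exp_integral_mul_eq ha]
  linear_combination m * hE

theorem varConstSol_mono {b b' : ℝ → ℝ} (hb : Continuous b) (hb' : Continuous b')
    {t : ℝ} (ht : 0 ≤ t) (hbb' : ∀ s ∈ Icc 0 t, b s ≤ b' s) (x₀ : ℝ) :
    varConstSol a b x₀ t ≤ varConstSol a b' x₀ t := by
  have hE : Continuous fun s => exp (∫ u in (0:ℝ)..s, a u) :=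
    continuous_exp.comp (continuous_primitive (fun _ _ => ha.intervalIntegrable _ _) (0:ℝ))
  refine mul_le_mul_of_nonneg_left (add_le_add_right ?_ _) (exp_pos _).le
  exact integral_mono_on ht ((hE.mul hb).intervalIntegrable 0 t)
    ((hE.mul hb').intervalIntegrable 0 t)
    fun s hs => mul_le_mul_of_nonneg_left (hbb' s hs) (exp_pos _).le

theorem tendsto_exp_neg_integral_atTop {α : ℝ} (hα : 0 < α) (hαa : ∀ t ≥ (0:ℝ), α ≤ a t) :
    Tendsto (fun t => exp (-(∫ s in (0:ℝ)..t, a s))) atTop (𝓝 0) := by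
  have hlin : ∀ t ≥ (0:ℝ), α * t ≤ ∫ s in (0:ℝ)..t, a s := fun t ht => by
    have : ∫ _ in (0:ℝ)..t, α ≤ ∫ s in (0:ℝ)..t, a s :=
      integral_mono_on ht intervalIntegrable_const (ha.intervalIntegrable 0 t)
        fun s hs => hαa s hs.1
    simpa [mul_comm] using this
  refine tendsto_exp_neg_atTop_nhds_zero.comp (tendsto_atTop_mono' _ ?_
    (tendsto_id.const_mul_atTop hα))
  filter_upwards [eventually_ge_atTop 0] with t ht using hlin t ht

theorem tendsto_varConstSol_const_mul_atTop {α : ℝ} (hα : 0 < α) (hαa : ∀ t ≥ (0:ℝ), α ≤ a t)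
    (m x₀ : ℝ) : Tendsto (varConstSol a (fun s => m * a s) x₀) atTop (𝓝 m) := by
  simp only [funext (varConstSol_const_mul ha m x₀)]
  simpa using ((tendsto_exp_neg_integral_atTop ha hα hαa).mul_const (x₀ - m)).const_add m

end VarConstSol

theorem le_limsup_of_tendsto_of_eventually_le_of_le {ι : Type*} {l : Filter ι} [l.NeBot]
    {u g h : ι → ℝ} {c M : ℝ} (hg : Tendsto g l (𝓝 c)) (hh : Tendsto h l (𝓝 M))
    (hgu : g ≤ᶠ[l] u) (huh : u ≤ᶠ[l] h) : c ≤ limsup u l := by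
  rw [← hg.limsup_eq]
  exact limsup_le_limsup hgu hg.isBoundedUnder_ge.isCoboundedUnder_le
    (hh.isBoundedUnder_le.mono_le huh)

theorem exists_pos_eq_of_continuousOn_of_eventually_lt {f : ℝ → ℝ} (hf : ContinuousOn f (Ici 0))
    {y : ℝ} (h0 : f 0 < y) (hlt : ∀ᶠ t in atTop, y < f t) : ∃ t > 0, f t = y := by
  obtain ⟨T, hyT, hT⟩ := (hlt.and (eventually_ge_atTop 0)).exists
  obtain ⟨t, ht, hft⟩ := intermediate_value_Ioc hT (hf.mono Icc_subset_Ici_self) ⟨h0, hyT.le⟩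
  exact ⟨t, ht.1, hft⟩

theorem stmt_19_general (α₁ β₁ α₂ β₂ ρ₀ ρcr : ℝ)
    (hα₁ : 0 < α₁) (hα₂ : 0 < α₂) (h₂ : α₂ ≤ β₂)
    (A₁ A₂ : ℝ → ℝ) (hA₁_cont : Continuous A₁) (hA₂_cont : Continuous A₂)
    (hA₁_bd : ∀ t ≥ (0:ℝ), α₁ ≤ A₁ t ∧ A₁ t ≤ β₁)
    (hA₂_bd : ∀ t ≥ (0:ℝ), α₂ ≤ A₂ t ∧ A₂ t ≤ β₂)
    (ρ : ℝ → ℝ) (hρ0 : ρ 0 = ρ₀)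
    (hρ : ∀ t ≥ (0:ℝ), HasDerivAt ρ (A₁ t - A₂ t * ρ t) t)
    (hρ_formula : ∀ t ≥ (0:ℝ), ρ t = Real.exp (-(∫ s in (0:ℝ)..t, A₂ s)) *
        (ρ₀ + ∫ s in (0:ℝ)..t, Real.exp (∫ u in (0:ℝ)..s, A₂ u) * A₁ s))
    (hρcr : ρ₀ < ρcr) (hρcr2 : ρcr < α₁ / β₂) :
    α₁ / β₂ ≤ Filter.limsup ρ Filter.atTop ∧ ∃ tcr > (0:ℝ), ρ tcr = ρcr := by
  have hβ₂ : 0 < β₂ := hα₂.trans_le h₂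
  have hrelax := tendsto_varConstSol_const_mul_atTop hA₂_cont hα₂ fun t ht => (hA₂_bd t ht).1
  have hlow : varConstSol A₂ (fun s => α₁ / β₂ * A₂ s) ρ₀ ≤ᶠ[atTop] ρ := by
    filter_upwards [eventually_ge_atTop 0] with t ht
    rw [hρ_formula t ht]
    refine varConstSol_mono hA₂_cont (by fun_prop) hA₁_cont ht (fun s hs => ?_) ρ₀
    obtain ⟨hαA₁, -⟩ := hA₁_bd s hs.1
    obtain ⟨-, hA₂β⟩ := hA₂_bd s hs.1
    rw [div_mul_eq_mul_div, div_le_iff₀ hβ₂]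
    nlinarith
  have hup : ρ ≤ᶠ[atTop] varConstSol A₂ (fun s => β₁ / α₂ * A₂ s) ρ₀ := by
    filter_upwards [eventually_ge_atTop 0] with t ht
    rw [hρ_formula t ht]
    refine varConstSol_mono hA₂_cont hA₁_cont (by fun_prop) ht (fun s hs => ?_) ρ₀
    obtain ⟨hαA₁, hA₁β⟩ := hA₁_bd s hs.1
    obtain ⟨hαA₂, -⟩ := hA₂_bd s hs.1
    rw [div_mul_eq_mul_div, le_div_iff₀ hα₂]
    nlinarith
  refine ⟨le_limsup_of_tendsto_of_eventually_le_of_le (hrelax _ _) (hrelax _ _) hlow hup, ?_⟩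
  refine exists_pos_eq_of_continuousOn_of_eventually_lt
    (fun t ht => (hρ t ht).continuousAt.continuousWithinAt) (hρ0 ▸ hρcr) ?_
  filter_upwards [(hrelax _ _).eventually (lt_mem_nhds hρcr2), hlow] with t h1 h2 using h1.trans_le h2

/-- Lower bound forcing existence of t_cr: for ρ' = A₁(t) - A₂(t)ρ with
0 < α₁ ≤ A₁ ≤ β₁, 0 < α₂ ≤ A₂ ≤ β₂, we have limsup_{t→∞} ρ(t) ≥ α₁/β₂; in particular if
0 ≤ ρ₀ < ρ_cr < α₁/β₂ there is t_cr > 0 with ρ(t_cr) = ρ_cr. -/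
theorem stmt_19 (α₁ β₁ α₂ β₂ ρ₀ ρcr : ℝ)
    (hα₁ : 0 < α₁) (h₁ : α₁ ≤ β₁) (hα₂ : 0 < α₂) (h₂ : α₂ ≤ β₂)
    (A₁ A₂ : ℝ → ℝ) (hA₁_cont : Continuous A₁) (hA₂_cont : Continuous A₂)
    (hA₁_bd : ∀ t ≥ (0:ℝ), α₁ ≤ A₁ t ∧ A₁ t ≤ β₁)
    (hA₂_bd : ∀ t ≥ (0:ℝ), α₂ ≤ A₂ t ∧ A₂ t ≤ β₂)
    (ρ : ℝ → ℝ) (hρ0 : ρ 0 = ρ₀) (hρ₀_nonneg : 0 ≤ ρ₀)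
    (hρ : ∀ t ≥ (0:ℝ), HasDerivAt ρ (A₁ t - A₂ t * ρ t) t)
    (hρ_formula : ∀ t ≥ (0:ℝ), ρ t = Real.exp (-(∫ s in (0:ℝ)..t, A₂ s)) *
        (ρ₀ + ∫ s in (0:ℝ)..t, Real.exp (∫ u in (0:ℝ)..s, A₂ u) * A₁ s))
    (hρcr : ρ₀ < ρcr) (hρcr2 : ρcr < α₁ / β₂) :
    α₁ / β₂ ≤ Filter.limsup ρ Filter.atTop ∧ ∃ tcr > (0:ℝ), ρ tcr = ρcr :=
  stmt_19_general α₁ β₁ α₂ β₂ ρ₀ ρcr hα₁ hα₂ h₂ A₁ A₂ hA₁_cont hA₂_cont hA₁_bd hA₂_bd ρ hρ0 hρ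
    hρ_formula hρcr hρcr2
end
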